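/- arXiv:1810.10491 — 3 statements merged into one kernel-verified Lean document; each statement's English description precedes it below -/
import Mathlib

section
/- Let G be a gyrogroup equipped with a gyronorm ‖·‖. Define d(x, y) = ‖⊖x ⊕ y‖ for all x, y ∈ G. Then d is a metric on G: d(x,y) ≥ 0 with equality iff x = y, d is symmetric, and d satisfies the triangle inequality. -/
/-- A gyrogroup: a set with a binary operation `add`, identity `e`, inversion `neg`,
and gyroautomorphisms `gyr` satisfying the gyrogroup axioms. -/
structure Gyrogroup (G : Type*) where
  add : G → G → G
  e : G
  neg : G → G
  gyr : G → G → G → G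
  e_add : ∀ a, add e a = a
  add_e : ∀ a, add a e = a
  neg_add : ∀ a, add (neg a) a = e
  add_neg : ∀ a, add a (neg a) = e
  gyr_bijective : ∀ a b, Function.Bijective (gyr a b)
  gyr_add : ∀ a b x y, gyr a b (add x y) = add (gyr a b x) (gyr a b y)
  left_gyroassoc : ∀ a b c, add a (add b c) = add (add a b) (gyr a b c)
  left_loop : ∀ a b, gyr (add a b) b = gyr a b

/-- A gyronorm on a gyrogroup. -/
structure Gyronorm {G : Type*} (gg : Gyrogroup G) where
  toFun : G → ℝ
  nonneg : ∀ x, 0 ≤ toFun x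
  eq_zero_iff : ∀ x, toFun x = 0 ↔ x = gg.e
  neg_eq : ∀ x, toFun (gg.neg x) = toFun x
  subadd : ∀ x y, toFun (gg.add x y) ≤ toFun x + toFun y
  gyr_eq : ∀ a b x, toFun (gg.gyr a b x) = toFun x

/-!
Symmetry comes from the gyrosum inversion law `⊖(a ⊕ b) = gyr[a,b](⊖b ⊕ ⊖a)`: applied to
`a = ⊖x`, `b = y` it shows that `⊖(⊖x ⊕ y)` is a gyration of `⊖y ⊕ x`, and gyronorms are
invariant under both inversion and gyrations. The triangle inequality comes from left
gyroassociativity, `⊖x ⊕ z = (⊖x ⊕ y) ⊕ gyr[⊖x,y](⊖y ⊕ z)`, followed by subadditivity and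
gyration invariance.
-/

namespace Gyrogroup

variable {G : Type*} (gg : Gyrogroup G)

lemma add_left_cancel {a x y : G} (h : gg.add a x = gg.add a y) : x = y := by
  have h' := congrArg (gg.add (gg.neg a)) h
  rw [gg.left_gyroassoc, gg.left_gyroassoc, gg.neg_add, gg.e_add, gg.e_add] at h'
  exact (gg.gyr_bijective (gg.neg a) a).1 h'

lemma gyr_e_left (a c : G) : gg.gyr gg.e a c = c := by
  have h := gg.left_gyroassoc gg.e a c
  rw [gg.e_add, gg.e_add] at h
  exact gg.add_left_cancel h.symm

/-- The left loop property turns `gyr[⊖a, a]` into `gyr[e, a]`, which is trivial. -/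
lemma neg_add_cancel_left (a x : G) : gg.add (gg.neg a) (gg.add a x) = x := by
  rw [gg.left_gyroassoc, gg.neg_add, gg.e_add, ← gg.left_loop, gg.neg_add, gg.gyr_e_left]

lemma add_neg_cancel_left (a x : G) : gg.add a (gg.add (gg.neg a) x) = x := by
  rw [gg.left_gyroassoc, gg.add_neg, gg.e_add, ← gg.left_loop, gg.add_neg, gg.gyr_e_left]

lemma neg_neg (a : G) : gg.neg (gg.neg a) = a :=
  gg.add_left_cancel (a := gg.neg a) (by rw [gg.add_neg, gg.neg_add])

lemma neg_add_eq_e_iff {x y : G} : gg.add (gg.neg x) y = gg.e ↔ x = y := by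
  constructor
  · intro h
    have h' := congrArg (gg.add x) h
    rw [gg.add_neg_cancel_left, gg.add_e] at h'
    exact h'.symm
  · rintro rfl
    exact gg.neg_add x

lemma neg_add_eq_gyr (a b : G) :
    gg.neg (gg.add a b) = gg.gyr a b (gg.add (gg.neg b) (gg.neg a)) := by
  have h : gg.add (gg.add a b) (gg.gyr a b (gg.add (gg.neg b) (gg.neg a))) = gg.e := by
    rw [← gg.left_gyroassoc, gg.add_neg_cancel_left, gg.add_neg]
  have h' := congrArg (gg.add (gg.neg (gg.add a b))) h
  rw [gg.neg_add_cancel_left, gg.add_e] at h'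
  exact h'.symm

lemma neg_add_eq_add_gyr (x y z : G) :
    gg.add (gg.neg x) z
      = gg.add (gg.add (gg.neg x) y) (gg.gyr (gg.neg x) y (gg.add (gg.neg y) z)) := by
  rw [← gg.left_gyroassoc, gg.add_neg_cancel_left]

end Gyrogroup

namespace Gyronorm

variable {G : Type*} {gg : Gyrogroup G} (nm : Gyronorm gg)

def gyrodist (x y : G) : ℝ := nm.toFun (gg.add (gg.neg x) y)

lemma gyrodist_nonneg (x y : G) : 0 ≤ nm.gyrodist x y := nm.nonneg _

lemma gyrodist_eq_zero_iff {x y : G} : nm.gyrodist x y = 0 ↔ x = y :=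
  (nm.eq_zero_iff _).trans gg.neg_add_eq_e_iff

lemma gyrodist_comm (x y : G) : nm.gyrodist x y = nm.gyrodist y x := by
  rw [gyrodist, gyrodist, ← nm.neg_eq, gg.neg_add_eq_gyr, nm.gyr_eq, gg.neg_neg]

lemma gyrodist_triangle (x y z : G) :
    nm.gyrodist x z ≤ nm.gyrodist x y + nm.gyrodist y z := by
  calc nm.gyrodist x z
      ≤ nm.toFun (gg.add (gg.neg x) y)
          + nm.toFun (gg.gyr (gg.neg x) y (gg.add (gg.neg y) z)) := by
        rw [gyrodist, gg.neg_add_eq_add_gyr x y z]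
        exact nm.subadd _ _
    _ = nm.gyrodist x y + nm.gyrodist y z := by rw [nm.gyr_eq, gyrodist, gyrodist]

end Gyronorm

/-- The gyronorm metric `d(x,y) = ‖⊖x ⊕ y‖` is a metric: nonnegative, vanishing
exactly on the diagonal, symmetric, and satisfying the triangle inequality. -/
theorem gyronorm_metric {G : Type*} (gg : Gyrogroup G) (nm : Gyronorm gg)
    (d : G → G → ℝ) (hd : ∀ x y, d x y = nm.toFun (gg.add (gg.neg x) y)) :
    (∀ x y, 0 ≤ d x y) ∧
    (∀ x y, d x y = 0 ↔ x = y) ∧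
    (∀ x y, d x y = d y x) ∧
    (∀ x y z, d x z ≤ d x y + d y z) := by
  obtain rfl : d = nm.gyrodist := funext fun x => funext (hd x)
  exact ⟨nm.gyrodist_nonneg, fun _ _ => nm.gyrodist_eq_zero_iff, nm.gyrodist_comm,
    nm.gyrodist_triangle⟩
end

section
/- The function ‖v‖_E = tanh⁻¹(‖v‖) (inverse hyperbolic tangent of the Euclidean norm) is a gyronorm on the Einstein gyrogroup (𝔹, ⊕_E): it is nonnegative and vanishes exactly at 0, satisfies ‖−v‖_E = ‖v‖_E, satisfies the subadditivity tanh⁻¹‖u ⊕_E v‖ ≤ tanh⁻¹‖u‖ + tanh⁻¹‖v‖, and is invariant under the gyroautomorphisms: tanh⁻¹‖gyr[u,v]w‖ = tanh⁻¹‖w‖ for all u, v, w ∈ 𝔹. -/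
/-!
With the Lorentz factor `γ_v = (1 - ‖v‖²)^(-1/2)`, Einstein addition becomes Minkowski geometry:
`γ_{u ⊕ v} = γ_u γ_v (1 + ⟪u, v⟫)`, and left translation by `u` acts as a Lorentz boost, so it
preserves `γ_a γ_b (1 - ⟪a, b⟫)`, the Minkowski product of the four-velocities of `a` and `b`,
which equals `γ_{⊖a ⊕ b}`. Hence `γ_{gyr[u,v]w} = γ_{⊖v ⊕ (v ⊕ w)} = γ_w`, and gyrations preserve
the norm. For subadditivity, Cauchy–Schwarz in the gamma identity bounds `‖u ⊕ v‖` by the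
one-dimensional Einstein sum `(‖u‖ + ‖v‖) / (1 + ‖u‖ ‖v‖)`, on which `artanh` is additive.
-/

open scoped RealInnerProductSpace

/-- The inverse hyperbolic tangent on `(-1, 1)`. -/
noncomputable def artanh (x : ℝ) : ℝ := (1 / 2) * Real.log ((1 + x) / (1 - x))

/-- The Lorentz factor `γ_u = 1/√(1 - ‖u‖²)`. -/
noncomputable def lorentzGamma {n : ℕ} (u : EuclideanSpace ℝ (Fin n)) : ℝ :=
  1 / Real.sqrt (1 - ‖u‖ ^ 2)

/-- Einstein addition on the open unit ball of `ℝⁿ`. -/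
noncomputable def einsteinAdd {n : ℕ} (u v : EuclideanSpace ℝ (Fin n)) :
    EuclideanSpace ℝ (Fin n) :=
  (1 / (1 + ⟪u, v⟫)) •
    (u + (1 / lorentzGamma u) • v +
      ((lorentzGamma u / (1 + lorentzGamma u)) * ⟪u, v⟫) • u)

/-- The gyroautomorphisms of the Einstein gyrogroup, via the gyrator identity
`gyr[u,v]w = ⊖(u ⊕ v) ⊕ (u ⊕ (v ⊕ w))`. -/
noncomputable def einsteinGyr {n : ℕ} (u v w : EuclideanSpace ℝ (Fin n)) :
    EuclideanSpace ℝ (Fin n) :=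
  einsteinAdd (-(einsteinAdd u v)) (einsteinAdd u (einsteinAdd v w))

open Set

lemma artanh_eq_real_artanh {x : ℝ} (hx : x ∈ Icc (-1) 1) : artanh x = Real.artanh x :=
  (Real.artanh_eq_half_log hx).symm

lemma artanh_nonneg {x : ℝ} (hx₀ : 0 ≤ x) (hx₁ : x ≤ 1) : 0 ≤ artanh x := by
  rw [artanh_eq_real_artanh ⟨by linarith, hx₁⟩]
  exact Real.artanh_nonneg hx₀

lemma artanh_eq_zero_iff {x : ℝ} (hx : x ∈ Ioo (-1) 1) : artanh x = 0 ↔ x = 0 := by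
  rw [artanh_eq_real_artanh (Ioo_subset_Icc_self hx)]
  simpa using Real.artanh_injOn.eq_iff hx (show (0 : ℝ) ∈ Ioo (-1) 1 by norm_num)

lemma artanh_le_artanh {x y : ℝ} (hx : -1 < x) (hy : y < 1) (hxy : x ≤ y) :
    artanh x ≤ artanh y := by
  rw [artanh_eq_real_artanh ⟨hx.le, by linarith⟩, artanh_eq_real_artanh ⟨by linarith, hy.le⟩]
  exact Real.artanh_le_artanh hx hy hxy

lemma artanh_add {x y : ℝ} (hx : x ∈ Ioo (-1) 1) (hy : y ∈ Ioo (-1) 1) :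
    artanh x + artanh y = artanh ((x + y) / (1 + x * y)) := by
  obtain ⟨hx₁, hx₂⟩ := hx
  obtain ⟨hy₁, hy₂⟩ := hy
  have hxy : 0 < 1 + x * y := by nlinarith
  have hsum : (1 + (x + y) / (1 + x * y)) / (1 - (x + y) / (1 + x * y))
      = (1 + x) / (1 - x) * ((1 + y) / (1 - y)) := by
    have hplus : 1 + (x + y) / (1 + x * y) = (1 + x) * (1 + y) / (1 + x * y) := by
      field_simp; ring
    have hminus : 1 - (x + y) / (1 + x * y) = (1 - x) * (1 - y) / (1 + x * y) := by
      field_simp; ring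
    rw [hplus, hminus, div_div_div_cancel_right₀ hxy.ne', mul_div_mul_comm]
  have hx₀ : (1 + x) / (1 - x) ≠ 0 := (div_pos (by linarith) (by linarith)).ne'
  have hy₀ : (1 + y) / (1 - y) ≠ 0 := (div_pos (by linarith) (by linarith)).ne'
  rw [artanh, artanh, artanh, hsum, Real.log_mul hx₀ hy₀]
  ring

lemma neg_one_lt_real_inner {F : Type*} [NormedAddCommGroup F] [InnerProductSpace ℝ F]
    {x y : F} (hx : ‖x‖ ≤ 1) (hy : ‖y‖ < 1) : -1 < ⟪x, y⟫ := by
  have := abs_le.mp (abs_real_inner_le_norm x y)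
  nlinarith [norm_nonneg x, norm_nonneg y]

section

variable {n : ℕ} {u v w a b : EuclideanSpace ℝ (Fin n)}

lemma one_div_lorentzGamma (u : EuclideanSpace ℝ (Fin n)) :
    1 / lorentzGamma u = √(1 - ‖u‖ ^ 2) := by
  rw [lorentzGamma, one_div_one_div]

lemma lorentzGamma_div_one_add (hu : ‖u‖ < 1) :
    lorentzGamma u / (1 + lorentzGamma u) = 1 / (1 + √(1 - ‖u‖ ^ 2)) := by
  have : 0 < √(1 - ‖u‖ ^ 2) := Real.sqrt_pos.2 (by nlinarith [norm_nonneg u])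
  rw [lorentzGamma]
  field_simp
  ring

lemma lorentzGamma_sq_mul (hu : ‖u‖ < 1) : lorentzGamma u ^ 2 * (1 - ‖u‖ ^ 2) = 1 := by
  have : 0 < 1 - ‖u‖ ^ 2 := by nlinarith [norm_nonneg u]
  rw [lorentzGamma, div_pow, Real.sq_sqrt this.le]
  field_simp

@[simp]
lemma lorentzGamma_zero : lorentzGamma (0 : EuclideanSpace ℝ (Fin n)) = 1 := by
  simp [lorentzGamma]

lemma norm_eq_of_lorentzGamma_eq (hu : ‖u‖ ≤ 1) (hv : ‖v‖ ≤ 1)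
    (h : lorentzGamma u = lorentzGamma v) : ‖u‖ = ‖v‖ := by
  have hsqrt := congrArg (1 / ·) h
  simp only [one_div_lorentzGamma] at hsqrt
  rw [Real.sqrt_inj (by nlinarith [norm_nonneg u]) (by nlinarith [norm_nonneg v])] at hsqrt
  nlinarith [norm_nonneg u, norm_nonneg v]

@[simp]
lemma einsteinAdd_zero_right (u : EuclideanSpace ℝ (Fin n)) : einsteinAdd u 0 = u := by
  simp [einsteinAdd]

lemma inner_einsteinAdd_einsteinAdd (hu : ‖u‖ < 1) (ha : 1 + ⟪u, a⟫ ≠ 0)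
    (hb : 1 + ⟪u, b⟫ ≠ 0) :
    (1 + ⟪u, a⟫) * (1 + ⟪u, b⟫) * (1 - ⟪einsteinAdd u a, einsteinAdd u b⟫)
      = (1 - ‖u‖ ^ 2) * (1 - ⟪a, b⟫) := by
  unfold einsteinAdd
  rw [one_div_lorentzGamma, lorentzGamma_div_one_add hu]
  simp only [inner_add_left, inner_add_right, real_inner_smul_left, real_inner_smul_right,
    real_inner_self_eq_norm_sq, real_inner_comm u a]
  have hs : 0 ≤ √(1 - ‖u‖ ^ 2) := Real.sqrt_nonneg _
  have hnorm : ‖u‖ ^ 2 = 1 - √(1 - ‖u‖ ^ 2) ^ 2 := by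
    rw [Real.sq_sqrt (by nlinarith [norm_nonneg u])]; ring
  generalize √(1 - ‖u‖ ^ 2) = s at hs hnorm
  rw [hnorm]
  have : 1 + s ≠ 0 := by positivity
  field_simp
  ring

lemma one_sub_norm_einsteinAdd_sq (hu : ‖u‖ < 1) (hv : ‖v‖ < 1) :
    (1 + ⟪u, v⟫) ^ 2 * (1 - ‖einsteinAdd u v‖ ^ 2) = (1 - ‖u‖ ^ 2) * (1 - ‖v‖ ^ 2) := by
  have huv := neg_one_lt_real_inner hu.le hv
  rw [sq, ← real_inner_self_eq_norm_sq, ← real_inner_self_eq_norm_sq v]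
  exact inner_einsteinAdd_einsteinAdd hu (by linarith) (by linarith)

lemma norm_einsteinAdd_lt_one (hu : ‖u‖ < 1) (hv : ‖v‖ < 1) : ‖einsteinAdd u v‖ < 1 := by
  have h := one_sub_norm_einsteinAdd_sq hu hv
  have : 0 < (1 - ‖u‖ ^ 2) * (1 - ‖v‖ ^ 2) :=
    mul_pos (by nlinarith [norm_nonneg u]) (by nlinarith [norm_nonneg v])
  have : 0 < 1 - ‖einsteinAdd u v‖ ^ 2 := pos_of_mul_pos_right (h ▸ this) (sq_nonneg _)
  nlinarith [norm_nonneg (einsteinAdd u v)]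

lemma lorentzGamma_einsteinAdd (hu : ‖u‖ < 1) (hv : ‖v‖ < 1) :
    lorentzGamma (einsteinAdd u v) = lorentzGamma u * lorentzGamma v * (1 + ⟪u, v⟫) := by
  have huv : 0 < 1 + ⟪u, v⟫ := by linarith [neg_one_lt_real_inner hu.le hv]
  have hu' : 0 < √(1 - ‖u‖ ^ 2) := Real.sqrt_pos.2 (by nlinarith [norm_nonneg u])
  have hv' : 0 < √(1 - ‖v‖ ^ 2) := Real.sqrt_pos.2 (by nlinarith [norm_nonneg v])
  have hsq :
      1 - ‖einsteinAdd u v‖ ^ 2 = (√(1 - ‖u‖ ^ 2) * √(1 - ‖v‖ ^ 2) / (1 + ⟪u, v⟫)) ^ 2 := by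
    rw [div_pow, mul_pow, Real.sq_sqrt (by nlinarith [norm_nonneg u]),
      Real.sq_sqrt (by nlinarith [norm_nonneg v]), eq_div_iff (by positivity),
      ← one_sub_norm_einsteinAdd_sq hu hv]
    ring
  rw [lorentzGamma, lorentzGamma, lorentzGamma, hsq, Real.sqrt_sq (by positivity)]
  field_simp

lemma lorentzGamma_neg_einsteinAdd (ha : ‖a‖ < 1) (hb : ‖b‖ < 1) :
    lorentzGamma (einsteinAdd (-a) b) = lorentzGamma a * lorentzGamma b * (1 - ⟪a, b⟫) := by
  rw [lorentzGamma_einsteinAdd (by rwa [norm_neg]) hb, inner_neg_left, ← sub_eq_add_neg]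
  simp only [lorentzGamma, norm_neg]

lemma lorentzGamma_mul_one_sub_inner_einsteinAdd (hu : ‖u‖ < 1) (ha : ‖a‖ < 1) (hb : ‖b‖ < 1) :
    lorentzGamma (einsteinAdd u a) * lorentzGamma (einsteinAdd u b) *
        (1 - ⟪einsteinAdd u a, einsteinAdd u b⟫)
      = lorentzGamma a * lorentzGamma b * (1 - ⟪a, b⟫) := by
  have hua := neg_one_lt_real_inner hu.le ha
  have hub := neg_one_lt_real_inner hu.le hb
  have hinner := inner_einsteinAdd_einsteinAdd hu (a := a) (b := b) (by linarith) (by linarith)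
  rw [lorentzGamma_einsteinAdd hu ha, lorentzGamma_einsteinAdd hu hb]
  linear_combination lorentzGamma u ^ 2 * lorentzGamma a * lorentzGamma b * hinner
    + lorentzGamma a * lorentzGamma b * (1 - ⟪a, b⟫) * lorentzGamma_sq_mul hu

lemma lorentzGamma_einsteinGyr (hu : ‖u‖ < 1) (hv : ‖v‖ < 1) (hw : ‖w‖ < 1) :
    lorentzGamma (einsteinGyr u v w) = lorentzGamma w := by
  have hvw := norm_einsteinAdd_lt_one hv hw
  calc lorentzGamma (einsteinGyr u v w)
      = lorentzGamma (einsteinAdd u v) * lorentzGamma (einsteinAdd u (einsteinAdd v w)) *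
          (1 - ⟪einsteinAdd u v, einsteinAdd u (einsteinAdd v w)⟫) :=
        lorentzGamma_neg_einsteinAdd (norm_einsteinAdd_lt_one hu hv)
          (norm_einsteinAdd_lt_one hu hvw)
    _ = lorentzGamma (einsteinAdd v 0) * lorentzGamma (einsteinAdd v w) *
          (1 - ⟪einsteinAdd v 0, einsteinAdd v w⟫) := by
        rw [lorentzGamma_mul_one_sub_inner_einsteinAdd hu hv hvw, einsteinAdd_zero_right]
    _ = lorentzGamma w := by
        rw [lorentzGamma_mul_one_sub_inner_einsteinAdd hv (by simp) hw]
        simp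

lemma norm_einsteinGyr (hu : ‖u‖ < 1) (hv : ‖v‖ < 1) (hw : ‖w‖ < 1) :
    ‖einsteinGyr u v w‖ = ‖w‖ :=
  norm_eq_of_lorentzGamma_eq
    (norm_einsteinAdd_lt_one (by rw [norm_neg]; exact norm_einsteinAdd_lt_one hu hv)
      (norm_einsteinAdd_lt_one hu (norm_einsteinAdd_lt_one hv hw))).le
    hw.le (lorentzGamma_einsteinGyr hu hv hw)

lemma norm_einsteinAdd_le (hu : ‖u‖ < 1) (hv : ‖v‖ < 1) :
    ‖einsteinAdd u v‖ ≤ (‖u‖ + ‖v‖) / (1 + ‖u‖ * ‖v‖) := by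
  have hsq := one_sub_norm_einsteinAdd_sq hu hv
  have hinner := neg_one_lt_real_inner hu.le hv
  have hcs := real_inner_le_norm u v
  have hnu := norm_nonneg u
  have hnv := norm_nonneg v
  set t := (‖u‖ + ‖v‖) / (1 + ‖u‖ * ‖v‖)
  have ht : (1 + ‖u‖ * ‖v‖) ^ 2 * (1 - t ^ 2) = (1 - ‖u‖ ^ 2) * (1 - ‖v‖ ^ 2) := by
    simp only [t]
    field_simp
    ring
  have ht₁ : 0 ≤ 1 - t ^ 2 := by
    refine nonneg_of_mul_nonneg_right ?_ (by positivity : 0 < (1 + ‖u‖ * ‖v‖) ^ 2)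
    rw [ht]
    exact mul_nonneg (by nlinarith) (by nlinarith)
  have hfactor : (1 + ⟪u, v⟫) ^ 2 ≤ (1 + ‖u‖ * ‖v‖) ^ 2 := by gcongr; linarith
  have hcompare :
      (1 + ⟪u, v⟫) ^ 2 * (1 - t ^ 2) ≤ (1 + ⟪u, v⟫) ^ 2 * (1 - ‖einsteinAdd u v‖ ^ 2) := by
    rw [hsq, ← ht]
    exact mul_le_mul_of_nonneg_right hfactor ht₁
  have hN : ‖einsteinAdd u v‖ ^ 2 ≤ t ^ 2 := by
    have := le_of_mul_le_mul_left hcompare (by nlinarith)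
    linarith
  exact (pow_le_pow_iff_left₀ (norm_nonneg _) (by positivity) two_ne_zero).1 hN

lemma artanh_norm_einsteinAdd_le (hu : ‖u‖ < 1) (hv : ‖v‖ < 1) :
    artanh ‖einsteinAdd u v‖ ≤ artanh ‖u‖ + artanh ‖v‖ := by
  have hnu := norm_nonneg u
  have hnv := norm_nonneg v
  rw [artanh_add ⟨by linarith, hu⟩ ⟨by linarith, hv⟩]
  refine artanh_le_artanh (by linarith [norm_nonneg (einsteinAdd u v)]) ?_
    (norm_einsteinAdd_le hu hv)
  rw [div_lt_one (by positivity)]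
  nlinarith

end

/-- The function `‖v‖_E = tanh⁻¹‖v‖` is a gyronorm on the Einstein gyrogroup
`(𝔹, ⊕_E)`: it is nonnegative on `𝔹` and vanishes exactly at `0`, is invariant under
negation, is subadditive with respect to Einstein addition, and is invariant under
the gyroautomorphisms. -/
theorem artanh_norm_is_gyronorm_einstein (n : ℕ) :
    (∀ v : EuclideanSpace ℝ (Fin n), ‖v‖ < 1 → 0 ≤ artanh ‖v‖) ∧
    (∀ v : EuclideanSpace ℝ (Fin n), ‖v‖ < 1 → (artanh ‖v‖ = 0 ↔ v = 0)) ∧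
    (∀ v : EuclideanSpace ℝ (Fin n), ‖v‖ < 1 → artanh ‖-v‖ = artanh ‖v‖) ∧
    (∀ u v : EuclideanSpace ℝ (Fin n), ‖u‖ < 1 → ‖v‖ < 1 →
      artanh ‖einsteinAdd u v‖ ≤ artanh ‖u‖ + artanh ‖v‖) ∧
    (∀ u v w : EuclideanSpace ℝ (Fin n), ‖u‖ < 1 → ‖v‖ < 1 → ‖w‖ < 1 →
      artanh ‖einsteinGyr u v w‖ = artanh ‖w‖) := by
  refine ⟨fun v hv ↦ artanh_nonneg (norm_nonneg v) hv.le,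
    fun v hv ↦ (artanh_eq_zero_iff ⟨by linarith [norm_nonneg v], hv⟩).trans norm_eq_zero,
    fun v _ ↦ by rw [norm_neg],
    fun u v hu hv ↦ artanh_norm_einsteinAdd_le hu hv,
    fun u v w hu hv hw ↦ by rw [norm_einsteinGyr hu hv hw]⟩
end

section
/- The rapidity function d_E(u, v) = tanh⁻¹‖(−u) ⊕_E v‖ is a metric on the open unit ball 𝔹 of ℝⁿ: it is nonnegative and vanishes exactly when u = v, it is symmetric, and it satisfies the triangle inequality. -/
open scoped RealInnerProductSpace

/-!
The map `u ↦ γ_u (1, u)` sends the ball onto the upper sheet of the unit hyperboloid of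
Minkowski space `ℝ × ℝⁿ` (the Beltrami–Klein model). Ungar's gamma identity
`γ_{(-u) ⊕ v} = γ_u γ_v (1 - ⟪u, v⟫)` says that the Minkowski product of the lifts of `u` and `v`
is `γ_{(-u) ⊕ v}`, and `tanh⁻¹ x = cosh⁻¹ (1/√(1 - x²))`, so `d_E` is the hyperbolic distance
`cosh⁻¹ ⟪U, V⟫` of the hyperboloid model. Its triangle inequality is the reverse Cauchy–Schwarz
inequality on the (spacelike) Minkowski complement of the middle point `V`, which gives
`⟪U, W⟫ ≤ cosh (d(U, V) + d(V, W))`.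
-/

section Minkowski

variable {E : Type*} [NormedAddCommGroup E] [InnerProductSpace ℝ E]

noncomputable def minkowskiForm : LinearMap.BilinForm ℝ (ℝ × E) :=
  (LinearMap.mul ℝ ℝ).compl₁₂ (LinearMap.fst ℝ ℝ E) (LinearMap.fst ℝ ℝ E) -
    (innerₗ E).compl₁₂ (LinearMap.snd ℝ ℝ E) (LinearMap.snd ℝ ℝ E)

@[simp]
lemma minkowskiForm_apply (p q : ℝ × E) : minkowskiForm p q = p.1 * q.1 - ⟪p.2, q.2⟫ := rfl

lemma minkowskiForm_comm (p q : ℝ × E) : minkowskiForm p q = minkowskiForm q p := by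
  simp only [minkowskiForm_apply, mul_comm p.1, real_inner_comm p.2]

lemma minkowskiForm_isSymm : LinearMap.BilinForm.IsSymm (minkowskiForm (E := E)) :=
  ⟨minkowskiForm_comm⟩

lemma minkowskiForm_self_nonpos_of_orthogonal {p q : ℝ × E} (hp : 0 < minkowskiForm p p)
    (hq : minkowskiForm p q = 0) : minkowskiForm q q ≤ 0 := by
  obtain ⟨b, y⟩ := p
  obtain ⟨a, x⟩ := q
  simp only [minkowskiForm_apply, sub_pos, sub_eq_zero] at hp hq ⊢
  rw [real_inner_self_eq_norm_sq] at hp ⊢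
  have hcs : (b * a) ^ 2 ≤ (‖y‖ * ‖x‖) ^ 2 := by
    rw [hq]
    exact sq_le_sq' (neg_le_of_abs_le (abs_real_inner_le_norm y x)) (real_inner_le_norm y x)
  nlinarith [mul_nonneg (sq_nonneg ‖x‖) (sub_nonneg.2 hp.le)]

lemma sq_minkowskiForm_le_of_orthogonal {p q r : ℝ × E} (hp : 0 < minkowskiForm p p)
    (hq : minkowskiForm p q = 0) (hr : minkowskiForm p r = 0) :
    minkowskiForm q r ^ 2 ≤ minkowskiForm q q * minkowskiForm r r := by
  have hcs := ((-minkowskiForm).restrict (LinearMap.ker (minkowskiForm p))).apply_sq_le_of_symm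
    (fun s => neg_nonneg.2 (minkowskiForm_self_nonpos_of_orthogonal hp s.2))
    (LinearMap.BilinForm.isSymm_iff.mp (minkowskiForm_isSymm.neg.restrict _)) ⟨q, hq⟩ ⟨r, hr⟩
  simpa [-minkowskiForm_apply] using hcs

lemma minkowskiForm_le_of_self_eq_one {p q r : ℝ × E} (hp : minkowskiForm p p = 1)
    (hq : minkowskiForm q q = 1) (hr : minkowskiForm r r = 1) :
    minkowskiForm p r ≤ minkowskiForm p q * minkowskiForm q r +
      √(minkowskiForm p q ^ 2 - 1) * √(minkowskiForm q r ^ 2 - 1) := by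
  set a := minkowskiForm p q
  set b := minkowskiForm q r
  have hq₀ : 0 < minkowskiForm q q := hq ▸ one_pos
  have hpq : minkowskiForm q (p - a • q) = 0 := by
    simp only [map_sub, map_smul, smul_eq_mul, hq, a, minkowskiForm_comm q p]; ring
  have hrq : minkowskiForm q (r - b • q) = 0 := by
    simp only [map_sub, map_smul, smul_eq_mul, hq, b]; ring
  have hpp : minkowskiForm (p - a • q) (p - a • q) = -(a ^ 2 - 1) := by
    simp only [map_sub, map_smul, LinearMap.sub_apply, LinearMap.smul_apply, smul_eq_mul, hp, hq,
      a, minkowskiForm_comm q p]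
    ring
  have hrr : minkowskiForm (r - b • q) (r - b • q) = -(b ^ 2 - 1) := by
    simp only [map_sub, map_smul, LinearMap.sub_apply, LinearMap.smul_apply, smul_eq_mul, hr, hq,
      b, minkowskiForm_comm r q]
    ring
  have hpr : minkowskiForm (p - a • q) (r - b • q) = minkowskiForm p r - a * b := by
    simp only [map_sub, map_smul, LinearMap.sub_apply, LinearMap.smul_apply, smul_eq_mul, hq,
      a, b]
    ring
  have ha : 0 ≤ a ^ 2 - 1 := by
    linarith [minkowskiForm_self_nonpos_of_orthogonal hq₀ hpq]
  have hcs := sq_minkowskiForm_le_of_orthogonal hq₀ hpq hrq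
  rw [hpp, hrr, hpr, neg_mul_neg] at hcs
  calc minkowskiForm p r = a * b + (minkowskiForm p r - a * b) := by ring
    _ ≤ a * b + √((a ^ 2 - 1) * (b ^ 2 - 1)) :=
      add_le_add_right ((le_abs_self _).trans (Real.abs_le_sqrt hcs)) _
    _ = a * b + √(a ^ 2 - 1) * √(b ^ 2 - 1) := by rw [Real.sqrt_mul ha]

noncomputable def hyperboloidLift (u : E) : ℝ × E :=
  ((√(1 - ‖u‖ ^ 2))⁻¹, (√(1 - ‖u‖ ^ 2))⁻¹ • u)

lemma minkowskiForm_hyperboloidLift (u v : E) :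
    minkowskiForm (hyperboloidLift u) (hyperboloidLift v) =
      (1 - ⟪u, v⟫) / (√(1 - ‖u‖ ^ 2) * √(1 - ‖v‖ ^ 2)) := by
  simp only [hyperboloidLift, minkowskiForm_apply, real_inner_smul_left, real_inner_smul_right]
  ring

lemma minkowskiForm_hyperboloidLift_self {u : E} (hu : ‖u‖ < 1) :
    minkowskiForm (hyperboloidLift u) (hyperboloidLift u) = 1 := by
  have h : 0 < 1 - ‖u‖ ^ 2 := by nlinarith [norm_nonneg u]
  rw [minkowskiForm_hyperboloidLift, real_inner_self_eq_norm_sq, Real.mul_self_sqrt h.le,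
    div_self h.ne']

lemma inner_lt_one_of_norm_lt_one {u v : E} (hu : ‖u‖ < 1) (hv : ‖v‖ < 1) : ⟪u, v⟫ < 1 :=
  (real_inner_le_norm u v).trans_lt (by nlinarith [norm_nonneg u, norm_nonneg v])

lemma sq_one_sub_inner_sub_mul (u v : E) :
    (1 - ⟪u, v⟫) ^ 2 - (1 - ‖u‖ ^ 2) * (1 - ‖v‖ ^ 2) =
      (‖u‖ - ‖v‖) ^ 2 + (‖u‖ * ‖v‖ - ⟪u, v⟫) * (2 - ‖u‖ * ‖v‖ - ⟪u, v⟫) := by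
  ring

lemma mul_le_sq_one_sub_inner {u v : E} (hu : ‖u‖ < 1) (hv : ‖v‖ < 1) :
    (1 - ‖u‖ ^ 2) * (1 - ‖v‖ ^ 2) ≤ (1 - ⟪u, v⟫) ^ 2 := by
  have : ‖u‖ * ‖v‖ < 1 := by nlinarith [norm_nonneg u, norm_nonneg v]
  nlinarith [sq_one_sub_inner_sub_mul u v, sq_nonneg (‖u‖ - ‖v‖), real_inner_le_norm u v]

lemma mul_eq_sq_one_sub_inner_iff {u v : E} (hu : ‖u‖ < 1) (hv : ‖v‖ < 1) :
    (1 - ‖u‖ ^ 2) * (1 - ‖v‖ ^ 2) = (1 - ⟪u, v⟫) ^ 2 ↔ u = v := by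
  refine ⟨fun h => ?_, fun h => by rw [h, real_inner_self_eq_norm_sq]; ring⟩
  have hcs := real_inner_le_norm u v
  have : ‖u‖ * ‖v‖ < 1 := by nlinarith [norm_nonneg u, norm_nonneg v]
  have hnorm : ‖u‖ = ‖v‖ := by
    nlinarith [sq_one_sub_inner_sub_mul u v, sq_nonneg (‖u‖ - ‖v‖)]
  have hinner : ⟪u, v⟫ = ‖u‖ * ‖v‖ := by
    nlinarith [sq_one_sub_inner_sub_mul u v, sq_nonneg (‖u‖ - ‖v‖)]
  rw [← sub_eq_zero, ← norm_eq_zero, ← sq_eq_zero_iff, norm_sub_sq_real, hinner, hnorm]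
  ring

lemma one_le_minkowskiForm_hyperboloidLift {u v : E} (hu : ‖u‖ < 1) (hv : ‖v‖ < 1) :
    1 ≤ minkowskiForm (hyperboloidLift u) (hyperboloidLift v) := by
  have hu' : 0 < 1 - ‖u‖ ^ 2 := by nlinarith [norm_nonneg u]
  have hv' : 0 < 1 - ‖v‖ ^ 2 := by nlinarith [norm_nonneg v]
  rw [minkowskiForm_hyperboloidLift, ← Real.sqrt_mul hu'.le,
    one_le_div (Real.sqrt_pos.2 (mul_pos hu' hv')),
    Real.sqrt_le_left (sub_nonneg.2 (inner_lt_one_of_norm_lt_one hu hv).le)]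
  exact mul_le_sq_one_sub_inner hu hv

lemma minkowskiForm_hyperboloidLift_eq_one_iff {u v : E} (hu : ‖u‖ < 1) (hv : ‖v‖ < 1) :
    minkowskiForm (hyperboloidLift u) (hyperboloidLift v) = 1 ↔ u = v := by
  have hu' : 0 < 1 - ‖u‖ ^ 2 := by nlinarith [norm_nonneg u]
  have hv' : 0 < 1 - ‖v‖ ^ 2 := by nlinarith [norm_nonneg v]
  rw [minkowskiForm_hyperboloidLift, ← Real.sqrt_mul hu'.le,
    div_eq_one_iff_eq (Real.sqrt_pos.2 (mul_pos hu' hv')).ne', eq_comm,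
    Real.sqrt_eq_iff_eq_sq (mul_pos hu' hv').le
      (sub_nonneg.2 (inner_lt_one_of_norm_lt_one hu hv).le)]
  exact mul_eq_sq_one_sub_inner_iff hu hv

end Minkowski

lemma artanh_eq_arcosh {x : ℝ} (hx₀ : 0 ≤ x) (hx₁ : x < 1) :
    artanh x = Real.arcosh (1 / √(1 - x ^ 2)) := by
  rw [artanh, ← Real.artanh_eq_half_log ⟨by linarith, hx₁.le⟩,
    ← Real.cosh_artanh ⟨by linarith, hx₁⟩, Real.arcosh_cosh (Real.artanh_nonneg hx₀)]

open Real in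
lemma arcosh_le_arcosh_add_arcosh {a b c : ℝ} (ha : 1 ≤ a) (hb : 1 ≤ b) (hc : 0 < c)
    (h : c ≤ a * b + √(a ^ 2 - 1) * √(b ^ 2 - 1)) : arcosh c ≤ arcosh a + arcosh b := by
  have hcosh : cosh (arcosh a + arcosh b) = a * b + √(a ^ 2 - 1) * √(b ^ 2 - 1) := by
    rw [cosh_add, cosh_arcosh ha, cosh_arcosh hb, sinh_arcosh ha, sinh_arcosh hb]
  rw [← arcosh_cosh (add_nonneg (arcosh_nonneg ha) (arcosh_nonneg hb)), hcosh]
  exact (arcosh_le_arcosh hc (by linarith)).2 h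

section Einstein

variable {n : ℕ}

lemma einsteinAdd_neg_left {u : EuclideanSpace ℝ (Fin n)} (v : EuclideanSpace ℝ (Fin n))
    (hu : ‖u‖ < 1) (huv : ⟪u, v⟫ ≠ 1) :
    einsteinAdd (-u) v =
      ((⟪u, v⟫ / (1 + √(1 - ‖u‖ ^ 2)) - 1) / (1 - ⟪u, v⟫)) • u +
        (√(1 - ‖u‖ ^ 2) / (1 - ⟪u, v⟫)) • v := by
  have hs : 0 < √(1 - ‖u‖ ^ 2) := Real.sqrt_pos.2 (by nlinarith [norm_nonneg u])
  have h₁ : 1 - ⟪u, v⟫ ≠ 0 := sub_ne_zero.2 huv.symm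
  have h₂ : 1 + -⟪u, v⟫ ≠ 0 := by rwa [← sub_eq_add_neg]
  rw [einsteinAdd, lorentzGamma, norm_neg, inner_neg_left]
  match_scalars <;> field_simp <;> ring

lemma one_sub_norm_sq_einsteinAdd_neg {u v : EuclideanSpace ℝ (Fin n)} (hu : ‖u‖ < 1)
    (hv : ‖v‖ < 1) :
    1 - ‖einsteinAdd (-u) v‖ ^ 2 = (1 - ‖u‖ ^ 2) * (1 - ‖v‖ ^ 2) / (1 - ⟪u, v⟫) ^ 2 := by
  have h₁ : 1 - ⟪u, v⟫ ≠ 0 := (sub_pos.2 (inner_lt_one_of_norm_lt_one hu hv)).ne'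
  rw [einsteinAdd_neg_left v hu (inner_lt_one_of_norm_lt_one hu hv).ne]
  set s := √(1 - ‖u‖ ^ 2) with hs
  have hs₀ : 0 ≤ s := Real.sqrt_nonneg _
  have hu₂ : ‖u‖ ^ 2 = 1 - s ^ 2 := by rw [hs, Real.sq_sqrt (by nlinarith [norm_nonneg u])]; ring
  rw [norm_add_sq_real, norm_smul, norm_smul, real_inner_smul_left, real_inner_smul_right,
    mul_pow, mul_pow, Real.norm_eq_abs, Real.norm_eq_abs, sq_abs, sq_abs, hu₂]
  field_simp
  ring

lemma norm_einsteinAdd_neg_lt_one {u v : EuclideanSpace ℝ (Fin n)} (hu : ‖u‖ < 1)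
    (hv : ‖v‖ < 1) : ‖einsteinAdd (-u) v‖ < 1 := by
  have h : 0 < 1 - ‖einsteinAdd (-u) v‖ ^ 2 := by
    rw [one_sub_norm_sq_einsteinAdd_neg hu hv]
    have := (sub_pos.2 (inner_lt_one_of_norm_lt_one hu hv)).ne'
    have : 0 < 1 - ‖u‖ ^ 2 := by nlinarith [norm_nonneg u]
    have : 0 < 1 - ‖v‖ ^ 2 := by nlinarith [norm_nonneg v]
    positivity
  nlinarith [norm_nonneg (einsteinAdd (-u) v)]

lemma lorentzGamma_einsteinAdd_neg {u v : EuclideanSpace ℝ (Fin n)} (hu : ‖u‖ < 1)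
    (hv : ‖v‖ < 1) :
    lorentzGamma (einsteinAdd (-u) v) = minkowskiForm (hyperboloidLift u) (hyperboloidLift v) := by
  have hu' : 0 ≤ 1 - ‖u‖ ^ 2 := by nlinarith [norm_nonneg u]
  rw [lorentzGamma, one_sub_norm_sq_einsteinAdd_neg hu hv, Real.sqrt_div' _ (sq_nonneg _),
    Real.sqrt_sq (sub_nonneg.2 (inner_lt_one_of_norm_lt_one hu hv).le), Real.sqrt_mul hu',
    one_div_div, minkowskiForm_hyperboloidLift]

lemma artanh_norm_einsteinAdd_neg {u v : EuclideanSpace ℝ (Fin n)} (hu : ‖u‖ < 1)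
    (hv : ‖v‖ < 1) :
    artanh ‖einsteinAdd (-u) v‖ =
      Real.arcosh (minkowskiForm (hyperboloidLift u) (hyperboloidLift v)) := by
  rw [artanh_eq_arcosh (norm_nonneg _) (norm_einsteinAdd_neg_lt_one hu hv), ← lorentzGamma,
    lorentzGamma_einsteinAdd_neg hu hv]

end Einstein

/-- The rapidity function `d_E(u,v) = tanh⁻¹‖(−u) ⊕_E v‖` is a metric on the open
unit ball `𝔹` of `ℝⁿ`: nonnegative, vanishing exactly on the diagonal, symmetric,
and satisfying the triangle inequality. -/
theorem rapidity_metric_einstein (n : ℕ)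
    (dE : EuclideanSpace ℝ (Fin n) → EuclideanSpace ℝ (Fin n) → ℝ)
    (hdE : ∀ u v, dE u v = artanh ‖einsteinAdd (-u) v‖) :
    (∀ u v : EuclideanSpace ℝ (Fin n), ‖u‖ < 1 → ‖v‖ < 1 → 0 ≤ dE u v) ∧
    (∀ u v : EuclideanSpace ℝ (Fin n), ‖u‖ < 1 → ‖v‖ < 1 → (dE u v = 0 ↔ u = v)) ∧
    (∀ u v : EuclideanSpace ℝ (Fin n), ‖u‖ < 1 → ‖v‖ < 1 → dE u v = dE v u) ∧
    (∀ u v w : EuclideanSpace ℝ (Fin n), ‖u‖ < 1 → ‖v‖ < 1 → ‖w‖ < 1 →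
      dE u w ≤ dE u v + dE v w) := by
  have hd : ∀ u v : EuclideanSpace ℝ (Fin n), ‖u‖ < 1 → ‖v‖ < 1 →
      dE u v = Real.arcosh (minkowskiForm (hyperboloidLift u) (hyperboloidLift v)) :=
    fun u v hu hv => by rw [hdE, artanh_norm_einsteinAdd_neg hu hv]
  refine ⟨fun u v hu hv => ?_, fun u v hu hv => ?_, fun u v hu hv => ?_,
    fun u v w hu hv hw => ?_⟩
  · rw [hd u v hu hv]
    exact Real.arcosh_nonneg (one_le_minkowskiForm_hyperboloidLift hu hv)
  · rw [hd u v hu hv, Real.arcosh_eq_zero_iff (one_le_minkowskiForm_hyperboloidLift hu hv),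
      minkowskiForm_hyperboloidLift_eq_one_iff hu hv]
  · rw [hd u v hu hv, hd v u hv hu, minkowskiForm_comm]
  · rw [hd u w hu hw, hd u v hu hv, hd v w hv hw]
    exact arcosh_le_arcosh_add_arcosh (one_le_minkowskiForm_hyperboloidLift hu hv)
      (one_le_minkowskiForm_hyperboloidLift hv hw)
      (one_pos.trans_le (one_le_minkowskiForm_hyperboloidLift hu hw))
      (minkowskiForm_le_of_self_eq_one (minkowskiForm_hyperboloidLift_self hu)
        (minkowskiForm_hyperboloidLift_self hv) (minkowskiForm_hyperboloidLift_self hw))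
end
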